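/- Let W be a 2-dimensional complex vector space and let n ≤ m be positive integers. The linear map S^{m−1}W* ⊗ Λ^n(S^{m+n−2}W) → S^{n−1}W ⊗ Λ^{n−1}(S^{m+n−2}W) defined on decomposable elements by g ⊗ (f₁ ∧ ⋯ ∧ f_n) ↦ Σ_{i=1}^n (−1)^{i−1} (g · f_i) ⊗ (f₁ ∧ ⋯ f̂_i ⋯ ∧ f_n), where g · f denotes the contraction of the polynomial f ∈ S^{m+n−2}W by g ∈ S^{m−1}W*, is surjective. -/

import Mathlib

/-!
For infinitely many `t`, the powers `(X + tY)^d` span `S^d W` (a polynomial in `t` vanishing at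
infinitely many points is zero). Hence the target is spanned by the elements
`l^{n-1} ⊗ (l₁^{m+n-2} ∧ ⋯ ∧ l_{n-1}^{m+n-2})` with `l` different from every `lᵢ`. Since
`n - 1 ≤ m - 1`, some `g ∈ S^{m-1}W*` vanishes at `l₁, …, l_{n-1}` but not at `l`; then
`φ (g ⊗ (l^{m+n-2} ∧ l₁^{m+n-2} ∧ ⋯))` has a single nonzero term, `g(l) · l^{n-1} ⊗ (l₁^{m+n-2} ∧ ⋯)`.
-/

open TensorProduct

noncomputable section
namespace LO

/-- The `k`-th exterior power `Λ^k M` (as a submodule of the exterior algebra). -/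
def ExtPow (k : ℕ) (M : Type*) [AddCommGroup M] [Module ℂ M] :
    Submodule ℂ (ExteriorAlgebra ℂ M) := ⋀[ℂ]^k M

variable {M N : Type*} [AddCommGroup M] [Module ℂ M] [AddCommGroup N] [Module ℂ N]

/-- The decomposable element `v 0 ∧ ⋯ ∧ v (k-1)` of the `k`-th exterior power. -/
def wedgeFamily (k : ℕ) (v : Fin k → M) : ExtPow k M :=
  ⟨ExteriorAlgebra.ιMulti ℂ k v, ExteriorAlgebra.ιMulti_range ℂ k ⟨v, rfl⟩⟩

/-- Homogeneous polynomials of degree `d` in two variables: a model for the symmetric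
power `S^d W` of a 2-dimensional space `W`. -/
abbrev SymW (d : ℕ) := MvPolynomial.homogeneousSubmodule (Fin 2) ℂ d

/-- The `d`-th power `l^d` of a linear form `l ∈ W ≅ ℂ²`, as a homogeneous polynomial of
degree `d`. -/
def powH (l : Fin 2 → ℂ) (d : ℕ) : SymW d :=
  ⟨(l 0 • MvPolynomial.X 0 + l 1 • MvPolynomial.X 1) ^ d, by
    have h1 : ((l 0 • MvPolynomial.X 0 + l 1 • MvPolynomial.X 1 :
        MvPolynomial (Fin 2) ℂ)).IsHomogeneous 1 := by
      have := ((MvPolynomial.isHomogeneous_X ℂ (0 : Fin 2)).C_mul (l 0)).add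
        ((MvPolynomial.isHomogeneous_X ℂ (1 : Fin 2)).C_mul (l 1))
      simpa [MvPolynomial.smul_eq_C_mul] using this
    simpa using h1.pow d⟩

open MvPolynomial Submodule

theorem mem_span_image_sum_pow_smul {K V : Type*} [Field K] [AddCommGroup V] [Module K V]
    {S : Set K} (hS : S.Infinite) (d : ℕ) (c : ℕ → V) {k : ℕ} (hk : k ≤ d) :
    c k ∈ span K ((fun t => ∑ i ∈ Finset.range (d + 1), t ^ i • c i) '' S) := by
  by_contra hc
  obtain ⟨ψ, hψc, hψS⟩ := exists_dual_map_eq_bot_of_notMem hc inferInstance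
  -- `t ↦ ψ (∑ tⁱ • cᵢ)` is a polynomial vanishing on the infinite set `S`.
  set P : Polynomial K := ∑ i ∈ Finset.range (d + 1), Polynomial.C (ψ (c i)) * Polynomial.X ^ i
  have hP : P = 0 := by
    refine Polynomial.eq_zero_of_infinite_isRoot P (hS.mono fun t ht => ?_)
    have : ψ (∑ i ∈ Finset.range (d + 1), t ^ i • c i) = 0 := by
      rw [← mem_bot K, ← hψS]
      exact mem_map_of_mem (subset_span ⟨t, ht, rfl⟩)
    simp only [map_sum, map_smul, smul_eq_mul] at this
    show P.eval t = 0
    simpa only [P, Polynomial.eval_finsetSum,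
      Polynomial.eval_mul, Polynomial.eval_C, Polynomial.eval_pow, Polynomial.eval_X,
      mul_comm] using this
  apply hψc
  have := congrArg (Polynomial.coeff · k) hP
  simpa only [P, Polynomial.finsetSum_coeff, Polynomial.coeff_C_mul_X_pow, Finset.sum_ite_eq,
    Finset.mem_range, Nat.lt_succ_iff.2 hk, if_true, Polynomial.coeff_zero] using this

theorem span_eq_top_of_le_span_coe_image {R M : Type*} [Ring R] [AddCommGroup M] [Module R M]
    {p : Submodule R M} {s : Set p} (h : p ≤ span R ((↑) '' s)) : span R s = ⊤ := by
  refine map_injective_of_injective p.injective_subtype ?_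
  rw [map_span, Submodule.map_top, range_subtype]
  exact le_antisymm (span_le.2 (by rintro _ ⟨x, -, rfl⟩; exact x.2)) h

theorem coe_powH_one_eq_sum (d : ℕ) (t : ℂ) :
    (powH ![1, t] d : MvPolynomial (Fin 2) ℂ) = ∑ i ∈ Finset.range (d + 1),
      t ^ i • ((d.choose i : ℂ) • (X 1 ^ i * X 0 ^ (d - i))) := by
  simp only [powH, Matrix.cons_val_zero, Matrix.cons_val_one, one_smul]
  rw [add_comm, add_pow]
  refine Finset.sum_congr rfl fun i _ => ?_
  simp only [smul_eq_C_mul, C_eq_coe_nat, map_pow]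
  ring

theorem span_powH_image_eq_top (d : ℕ) {S : Set ℂ} (hS : S.Infinite) :
    span ℂ ((fun t => powH ![1, t] d) '' S) = ⊤ := by
  refine span_eq_top_of_le_span_coe_image ?_
  change homogeneousSubmodule (Fin 2) ℂ d ≤ _
  rw [homogeneousSubmodule_eq_finsupp_supported, AddMonoidAlgebra.supported_eq_span_single,
    span_le]
  rintro _ ⟨v, hv, rfl⟩
  have hv01 : v 0 + v 1 = d := by
    simpa [Finsupp.degree_eq_sum, Fin.sum_univ_two] using hv
  have hchoose : (d.choose (v 1) : ℂ) ≠ 0 := Nat.cast_ne_zero.2 (Nat.choose_pos (by omega)).ne'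
  have hmonomial : (monomial v 1 : MvPolynomial (Fin 2) ℂ) =
      (d.choose (v 1) : ℂ)⁻¹ • (d.choose (v 1) : ℂ) • (X 1 ^ v 1 * X 0 ^ (d - v 1)) := by
    rw [inv_smul_smul₀ hchoose, monomial_eq, C_1, one_mul,
      Finsupp.prod_fintype _ _ fun _ => pow_zero _, Fin.prod_univ_two, mul_comm,
      show d - v 1 = v 0 by omega]
  change monomial v 1 ∈ _
  rw [hmonomial, Set.image_image, funext (coe_powH_one_eq_sum d)]
  exact smul_mem _ _ (mem_span_image_sum_pow_smul hS d _ (by omega))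

theorem span_tmul_wedgeFamily_powH (d e k : ℕ) :
    span ℂ {x : SymW d ⊗[ℂ] ExtPow k (SymW e) | ∃ (t : ℂ) (s : Fin k → ℂ), (∀ j, s j ≠ t) ∧
      powH ![1, t] d ⊗ₜ wedgeFamily k (fun j => powH ![1, s j] e) = x} = ⊤ := by
  rw [eq_top_iff, ← TensorProduct.span_tmul_eq_top, span_le]
  rintro _ ⟨p, w, rfl⟩
  have hw : w ∈ span ℂ (exteriorPower.ιMulti ℂ k '' {a | Set.range a ⊆
      Set.range fun t => powH ![1, t] e}) := by
    rw [exteriorPower.ιMulti_span_of_span ℂ k _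
      (by simpa using span_powH_image_eq_top e Set.infinite_univ)]
    exact mem_top (R := ℂ) (M := ⋀[ℂ]^k (SymW e))
  refine (span_le (p := (span ℂ _).comap (TensorProduct.mk ℂ _ _ p))).2 ?_ hw
  rintro _ ⟨a, ha, rfl⟩
  choose s hs using Set.range_subset_iff.1 ha
  obtain rfl : a = fun j => powH ![1, s j] e := funext fun j => (hs j).symm
  have hp : p ∈ span ℂ ((fun t => powH ![1, t] d) '' (Set.range s)ᶜ) := by
    rw [span_powH_image_eq_top d (Set.finite_range s).infinite_compl]
    exact mem_top
  refine (span_le (p := (span ℂ _).comap ((TensorProduct.mk ℂ (SymW d) (ExtPow k (SymW e))).flip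
    (exteriorPower.ιMulti ℂ k fun j => powH ![1, s j] e)))).2 ?_ hp
  rintro _ ⟨t, ht, rfl⟩
  exact subset_span ⟨t, s, fun j hj => ht ⟨j, hj⟩, rfl⟩

theorem exists_eval_ne_zero_eval_eq_zero {d k : ℕ} (hkd : k ≤ d) {t : ℂ} {s : Fin k → ℂ}
    (hs : ∀ j, s j ≠ t) : ∃ g : SymW d, eval ![1, t] (g : MvPolynomial (Fin 2) ℂ) ≠ 0 ∧
      ∀ j, eval ![1, s j] (g : MvPolynomial (Fin 2) ℂ) = 0 := by
  set g : MvPolynomial (Fin 2) ℂ := (∏ j, (C (s j) * X 0 - X 1)) * X 0 ^ (d - k)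
  have hg : g.IsHomogeneous d := by
    have hprod := IsHomogeneous.prod Finset.univ
      (fun j => (C (s j) * X 0 - X 1 : MvPolynomial (Fin 2) ℂ)) (fun _ => 1)
      fun j _ => ((isHomogeneous_X ℂ 0).C_mul (s j)).sub (isHomogeneous_X ℂ 1)
    simp only [Finset.sum_const, Finset.card_univ, Fintype.card_fin, smul_eq_mul,
      mul_one] at hprod
    have h := hprod.mul (isHomogeneous_X_pow 0 (d - k))
    rwa [Nat.add_sub_cancel' hkd] at h
  refine ⟨⟨g, hg⟩, ?_, fun i => ?_⟩
  · simpa [g, Finset.prod_eq_zero_iff, sub_eq_zero] using hs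
  · simpa [g] using Finset.prod_eq_zero (Finset.mem_univ i) (by simp)

/-- (Writing `n = n' + 1` for a positive integer `n ≤ m`.)  The linear map
`S^{m-1}W^* ⊗ Λ^n(S^{m+n-2}W) → S^{n-1}W ⊗ Λ^{n-1}(S^{m+n-2}W)` defined on
decomposable elements by
`g ⊗ (f₁ ∧ ⋯ ∧ f_n) ↦ Σᵢ (-1)^{i-1} (g·fᵢ) ⊗ (f₁ ∧ ⋯ f̂ᵢ ⋯ ∧ f_n)`
is surjective; here `g·f` is the contraction, characterized by `g·l^{m+n-2} = g(l)·l^{n-1}`. -/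
theorem contraction_wedge_map_surjective (m n' : ℕ) (hm : n' + 1 ≤ m)
    (contr : ↥(SymW (m-1)) →ₗ[ℂ] ↥(SymW (m+n'-1)) →ₗ[ℂ] ↥(SymW n'))
    (hcontr : ∀ (g : SymW (m-1)) (l : Fin 2 → ℂ),
      contr g (powH l (m+n'-1)) = (MvPolynomial.eval l (g : MvPolynomial (Fin 2) ℂ)) • powH l n')
    (φ : (↥(SymW (m-1))) ⊗[ℂ] ↥(ExtPow (n'+1) ↥(SymW (m+n'-1))) →ₗ[ℂ]
      (↥(SymW n')) ⊗[ℂ] ↥(ExtPow n' ↥(SymW (m+n'-1))))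
    (hφ : ∀ (g : SymW (m-1)) (f : Fin (n'+1) → SymW (m+n'-1)),
      φ (g ⊗ₜ[ℂ] wedgeFamily (n'+1) f) =
        ∑ i : Fin (n'+1), ((-1 : ℂ)^(i : ℕ)) •
          ((contr g (f i)) ⊗ₜ[ℂ] wedgeFamily n' (fun j => f (i.succAbove j)))) :
    Function.Surjective φ := by
  rw [← LinearMap.range_eq_top, eq_top_iff, ← span_tmul_wedgeFamily_powH n' (m+n'-1) n', span_le]
  rintro _ ⟨t, s, hst, rfl⟩
  obtain ⟨g, hgt, hgs⟩ := exists_eval_ne_zero_eval_eq_zero (d := m-1) (by omega) hst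
  -- `g` vanishes at every `(1, s j)`, so only the `i = 0` term of `hφ` survives.
  refine ⟨(eval ![1, t] (g : MvPolynomial (Fin 2) ℂ))⁻¹ • g ⊗ₜ wedgeFamily (n'+1)
    (Fin.cons (powH ![1, t] _) fun j => powH ![1, s j] _), ?_⟩
  rw [map_smul, hφ, Fin.sum_univ_succ]
  simp [hcontr, hgs, TensorProduct.smul_tmul', smul_smul, inv_mul_cancel₀ hgt]

end LO
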